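/- Assume char k ≠ 2. Let λ ∈ Emb(K) have finite G-orbit, and let V := V(λ). Then Aut(V) is isomorphic as a group to K(λ)^×/(K^× · λ(K)^×), the quotient of the unit group of the field K(λ) by the subgroup generated by the nonzero elements of K and the nonzero elements of λ(K). -/

import Mathlib

/-!
Since `K(λ)` is algebraic over `K`, it is generated as a ring by `K` and `λ(K)`, so the map
`K ⊗_k K → K(λ)` defining `V(λ)` is surjective. Hence every `K ⊗_k K`-linear endomorphism `f` of
`V(λ)` is `K(λ)`-linear, i.e. multiplication by `f 1`, and `f ↦ f 1` identifies the automorphisms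
of `V(λ)` with `K(λ)ˣ`. Under this identification `v ↦ a • v • b` becomes the unit `a * λ b`, and
these units form the subgroup generated by `Kˣ` and `λ(K)ˣ`.
-/

open TensorProduct

noncomputable section

variable (k K : Type*) [Field k] [Field K] [Algebra k K]

/-- The compositum `K(λ)` of `K` and `λ(K)` inside the algebraic closure of `K`. -/
def Klam (lam : K →ₐ[k] AlgebraicClosure K) : IntermediateField K (AlgebraicClosure K) :=
  IntermediateField.adjoin K (Set.range lam)

theorem mem_Klam (lam : K →ₐ[k] AlgebraicClosure K) (x : K ⊗[k] K) :
    Algebra.TensorProduct.productMap (IsScalarTower.toAlgHom k K (AlgebraicClosure K)) lam x ∈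
      Klam k K lam := by
  induction x using TensorProduct.induction_on with
  | zero => simpa using zero_mem (Klam k K lam)
  | tmul a b =>
      rw [Algebra.TensorProduct.productMap_apply_tmul]
      refine mul_mem ?_ (IntermediateField.subset_adjoin K _ ⟨b, rfl⟩)
      . show algebraMap K (AlgebraicClosure K) a ∈ Klam k K lam
        exact (Klam k K lam).algebraMap_mem a
  | add x y hx hy => rw [map_add]; exact add_mem hx hy

/-- The ring map giving `K(λ)` its two-sided vector space structure,
`(a ⊗ b) ↦ a * λ b ∈ K(λ)`. -/
def VlamRingHom (lam : K →ₐ[k] AlgebraicClosure K) : (K ⊗[k] K) →+* ↥(Klam k K lam) :=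
  RingHom.codRestrict
    (Algebra.TensorProduct.productMap (IsScalarTower.toAlgHom k K (AlgebraicClosure K))
      lam).toRingHom
    (Klam k K lam) (mem_Klam k K lam)

/-- The two-sided vector space `V(λ)`: the underlying set is `K(λ)`, with module structure
`(a ⊗ b) • v = a * v * λ b`. -/
def Vlam (lam : K →ₐ[k] AlgebraicClosure K) : Type _ := ↥(Klam k K lam)

instance (lam : K →ₐ[k] AlgebraicClosure K) : AddCommGroup (Vlam k K lam) :=
  inferInstanceAs (AddCommGroup ↥(Klam k K lam))

set_option synthInstance.maxHeartbeats 1000000 in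
instance (lam : K →ₐ[k] AlgebraicClosure K) : Module (K ⊗[k] K) (Vlam k K lam) :=
  Module.compHom ↥(Klam k K lam) (VlamRingHom k K lam)

/-- The orbit `λ^G` of an embedding `λ : K → K̄` under `G = Gal(K̄/K)` acting by
post-composition. -/
def Orb (lam : K →ₐ[k] AlgebraicClosure K) : Set (K →ₐ[k] AlgebraicClosure K) :=
  {ν | ∃ g : AlgebraicClosure K ≃ₐ[K] AlgebraicClosure K,
    ν = (g.toAlgHom.restrictScalars k).comp lam}

/-- The subgroup of "inner" automorphisms of a two-sided vector space `V`, i.e. those of the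
form `v ↦ a • v • b` for nonzero `a, b ∈ K`. -/
def innerAut (V : Type*) [AddCommGroup V] [Module (K ⊗[k] K) V] :
    Subgroup (V ≃ₗ[K ⊗[k] K] V) where
  carrier := {f | ∃ a b : Kˣ, ∀ v : V, f v = (((a : K) ⊗ₜ[k] (b : K)) : K ⊗[k] K) • v}
  one_mem' := ⟨1, 1, fun v => by
    show v = _
    rw [Units.val_one, ← Algebra.TensorProduct.one_def, one_smul]⟩
  mul_mem' := by
    rintro f g ⟨a, b, hf⟩ ⟨c, d, hg⟩
    refine ⟨c * a, d * b, fun v => ?_⟩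
    show f (g v) = _
    rw [hg, map_smul, hf, smul_smul, Algebra.TensorProduct.tmul_mul_tmul,
      Units.val_mul, Units.val_mul]
  inv_mem' := by
    rintro f ⟨a, b, hf⟩
    refine ⟨a⁻¹, b⁻¹, fun v => ?_⟩
    apply f.injective
    show f (f.symm v) = _
    rw [f.apply_symm_apply, hf, smul_smul, Algebra.TensorProduct.tmul_mul_tmul]
    rw [Units.val_inv_eq_inv_val, Units.val_inv_eq_inv_val, mul_inv_cancel₀ a.ne_zero,
      mul_inv_cancel₀ b.ne_zero, ← Algebra.TensorProduct.one_def, one_smul]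

instance (V : Type*) [AddCommGroup V] [Module (K ⊗[k] K) V] : (innerAut k K V).Normal := by
  constructor
  rintro f ⟨a, b, hf⟩ g
  refine ⟨a, b, fun v => ?_⟩
  show g (f (g.symm v)) = _
  rw [hf, map_smul, g.apply_symm_apply]

/-- The subgroup of `K(λ)ˣ` generated by the nonzero elements of `K` and the nonzero elements
of `λ(K)`. -/
def lamUnits (lam : K →ₐ[k] AlgebraicClosure K) : Subgroup (↥(Klam k K lam))ˣ :=
  Subgroup.closure
    ({u : (↥(Klam k K lam))ˣ |
        ∃ a : K, ((u : ↥(Klam k K lam)) : AlgebraicClosure K) =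
          algebraMap K (AlgebraicClosure K) a} ∪
      {u : (↥(Klam k K lam))ˣ |
        ∃ b : K, ((u : ↥(Klam k K lam)) : AlgebraicClosure K) = lam b})

instance (lam : K →ₐ[k] AlgebraicClosure K) : (lamUnits k K lam).Normal :=
  Subgroup.normal_of_comm _


namespace LinearEquiv

variable {R M N : Type*} [Semiring R] [AddCommMonoid M] [AddCommMonoid N] [Module R M]
  [Module R N]

def autCongr (e : M ≃ₗ[R] N) : (M ≃ₗ[R] M) ≃* (N ≃ₗ[R] N) where
  toFun f := e.symm ≪≫ₗ f ≪≫ₗ e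
  invFun g := e ≪≫ₗ g ≪≫ₗ e.symm
  left_inv f := by ext; simp
  right_inv g := by ext; simp
  map_mul' f g := by ext; simp

end LinearEquiv

section SurjectiveAlgebraMap

variable {R S : Type*} [CommSemiring R] [CommSemiring S] [Algebra R S]

theorem LinearMap.apply_eq_mul_apply_one_of_surjective
    (h : Function.Surjective (algebraMap R S)) (f : S →ₗ[R] S) (s : S) : f s = s * f 1 := by
  obtain ⟨r, rfl⟩ := h s
  rw [Algebra.algebraMap_eq_smul_one, map_smul, smul_mul_assoc, one_mul]

theorem LinearEquiv.apply_eq_mul_apply_one_of_surjective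
    (h : Function.Surjective (algebraMap R S)) (f : S ≃ₗ[R] S) (s : S) : f s = s * f 1 :=
  LinearMap.apply_eq_mul_apply_one_of_surjective h f.toLinearMap s

def autEquivUnitsOfSurjective (h : Function.Surjective (algebraMap R S)) :
    (S ≃ₗ[R] S) ≃* Sˣ where
  toFun f := ⟨f 1, f.symm 1, by
      rw [← f.symm.apply_eq_mul_apply_one_of_surjective h, f.symm_apply_apply], by
      rw [← f.apply_eq_mul_apply_one_of_surjective h, f.apply_symm_apply]⟩
  invFun u := LinearEquiv.ofLinearMap (LinearMap.mulRight R (u : S)) (LinearMap.mulRight R ↑u⁻¹)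
    (by ext; simp) (by ext; simp)
  left_inv f := by
    ext s
    simp [f.apply_eq_mul_apply_one_of_surjective h s]
  right_inv u := by ext; simp
  map_mul' f g := by
    ext
    exact (f.apply_eq_mul_apply_one_of_surjective h (g 1)).trans (mul_comm _ _)

@[simp]
theorem coe_autEquivUnitsOfSurjective (h : Function.Surjective (algebraMap R S))
    (f : S ≃ₗ[R] S) : (autEquivUnitsOfSurjective h f : S) = f 1 := rfl

theorem autEquivUnitsOfSurjective_eq_algebraMap_iff (h : Function.Surjective (algebraMap R S))
    (f : S ≃ₗ[R] S) (r : R) :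
    (autEquivUnitsOfSurjective h f : S) = algebraMap R S r ↔ ∀ s, f s = r • s := by
  refine ⟨fun hf s => ?_, fun hf => by simpa [Algebra.algebraMap_eq_smul_one] using hf 1⟩
  rw [f.apply_eq_mul_apply_one_of_surjective h, ← coe_autEquivUnitsOfSurjective h, hf,
    Algebra.smul_def, mul_comm]

end SurjectiveAlgebraMap

section Vlam

variable (lam : K →ₐ[k] AlgebraicClosure K)

instance : Algebra (K ⊗[k] K) (Klam k K lam) := (VlamRingHom k K lam).toAlgebra

theorem coe_vlamRingHom_tmul (a b : K) :
    (VlamRingHom k K lam (a ⊗ₜ b) : AlgebraicClosure K) =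
      algebraMap K (AlgebraicClosure K) a * lam b :=
  Algebra.TensorProduct.productMap_apply_tmul _ _ a b

theorem vlamRingHom_surjective : Function.Surjective (VlamRingHom k K lam) := by
  rintro ⟨s, hs⟩
  let P := Algebra.TensorProduct.productLeftAlgHom (Algebra.ofId K (AlgebraicClosure K)) lam
  have hP : Algebra.adjoin K (Set.range lam) ≤ P.range :=
    Algebra.adjoin_le (by rintro _ ⟨b, rfl⟩; exact ⟨1 ⊗ₜ b, by simp [P]⟩)
  rw [Klam, ← IntermediateField.mem_toSubalgebra, IntermediateField.adjoin_toSubalgebra] at hs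
  obtain ⟨y, rfl⟩ := hP hs
  exact ⟨y, rfl⟩

def vlamEquivKlam : Vlam k K lam ≃ₗ[K ⊗[k] K] Klam k K lam where
  toFun v := v
  invFun v := v
  map_add' _ _ := rfl
  map_smul' _ _ := rfl
  left_inv _ := rfl
  right_inv _ := rfl

def autVlamEquivUnits : (Vlam k K lam ≃ₗ[K ⊗[k] K] Vlam k K lam) ≃* (Klam k K lam)ˣ :=
  (vlamEquivKlam k K lam).autCongr.trans
    (autEquivUnitsOfSurjective (vlamRingHom_surjective k K lam))

theorem mem_innerAut_vlam_iff (f : Vlam k K lam ≃ₗ[K ⊗[k] K] Vlam k K lam) :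
    f ∈ innerAut k K (Vlam k K lam) ↔
      ∃ a b : Kˣ, ((autVlamEquivUnits k K lam f : Klam k K lam) : AlgebraicClosure K) =
        algebraMap K (AlgebraicClosure K) a * lam b := by
  refine exists₂_congr fun a b => ?_
  rw [← coe_vlamRingHom_tmul, ← Subtype.ext_iff]
  exact (autEquivUnitsOfSurjective_eq_algebraMap_iff (vlamRingHom_surjective k K lam)
    ((vlamEquivKlam k K lam).autCongr f) (a ⊗ₜ b)).symm

theorem mem_lamUnits_iff (u : (Klam k K lam)ˣ) :
    u ∈ lamUnits k K lam ↔
      ∃ a b : Kˣ, ((u : Klam k K lam) : AlgebraicClosure K) =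
        algebraMap K (AlgebraicClosure K) a * lam b := by
  constructor
  · intro hu
    induction hu using Subgroup.closure_induction with
    | mem u hu =>
      have hu0 : ((u : Klam k K lam) : AlgebraicClosure K) ≠ 0 := by simp
      rcases hu with ⟨a, ha⟩ | ⟨b, hb⟩
      · exact ⟨Units.mk0 a (by rintro rfl; simp [ha] at hu0), 1, by simp [ha]⟩
      · exact ⟨1, Units.mk0 b (by rintro rfl; simp [hb] at hu0), by simp [hb]⟩
    | one => exact ⟨1, 1, by simp⟩
    | mul u v _ _ hu hv =>
      obtain ⟨a, b, hu⟩ := hu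
      obtain ⟨c, d, hv⟩ := hv
      exact ⟨a * c, b * d, by simp [hu, hv, mul_mul_mul_comm]⟩
    | inv u _ hu =>
      obtain ⟨a, b, hu⟩ := hu
      exact ⟨a⁻¹, b⁻¹, by simp [hu, mul_comm]⟩
  · rintro ⟨a, b, hab⟩
    have hb : lam b ∈ Klam k K lam := IntermediateField.subset_adjoin K _ ⟨b, rfl⟩
    let x : (Klam k K lam)ˣ := Units.map (algebraMap K (Klam k K lam)) a
    let y : (Klam k K lam)ˣ := Units.mk0 ⟨lam b, hb⟩ (by simp [Subtype.ext_iff])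
    have hxy : u = x * y := by ext; simp [x, y, hab]
    rw [hxy]
    exact mul_mem (Subgroup.subset_closure (Or.inl ⟨a, rfl⟩))
      (Subgroup.subset_closure (Or.inr ⟨b, rfl⟩))

theorem map_autVlamEquivUnits_innerAut :
    (innerAut k K (Vlam k K lam)).map (autVlamEquivUnits k K lam) = lamUnits k K lam := by
  ext u
  rw [Subgroup.map_equiv_eq_comap_symm, Subgroup.mem_comap, MonoidHom.coe_coe,
    mem_innerAut_vlam_iff, MulEquiv.apply_symm_apply, mem_lamUnits_iff]

end Vlam

variable [PerfectField k] [FiniteDimensional k K]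

theorem autVlam_eq_units_quot
    (lam : K →ₐ[k] AlgebraicClosure K) :
    Nonempty
      (((Vlam k K lam ≃ₗ[K ⊗[k] K] Vlam k K lam) ⧸ innerAut k K (Vlam k K lam)) ≃*
        ((↥(Klam k K lam))ˣ ⧸ lamUnits k K lam)) :=
  ⟨QuotientGroup.congr _ _ _ (map_autVlamEquivUnits_innerAut k K lam)⟩
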